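/- The Cayley transform C: S → Σ, (q', p') = ((1+p)⁻¹q, (1+p)⁻¹(1-p)), maps the unit sphere S = {(q,p) ∈ ℍⁿ×ℍ : |q|²+|p|² = 1} minus the point (0,-1) bijectively onto the boundary of the Siegel domain Σ = {(q',p') ∈ ℍⁿ×ℍ : Re(p') = |q'|²}, with inverse (q,p) = (2(1+p')⁻¹q', (1+p')⁻¹(1-p')). -/

import Mathlib

/-! With `c(p) = (1 + p)⁻¹ (1 - p)` one has `1 + c(p) = (1 + p)⁻¹ 2`; since `2` is central this
makes `c` an involution and makes the `q`-coordinates of the two transforms mutually inverse.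
With `N = |1 + p|²` one has `Re c(p) = (1 - |p|²) / N`, `|c(p)|² = |1 - p|² / N` and
`N = |1 - p|² + 4 Re p`: the first identity turns the sphere equation into the Siegel equation,
the last two turn the Siegel equation back into the sphere equation. -/

open scoped Quaternion

/-- The Cayley transform `(q,p) ↦ ((1+p)⁻¹q, (1+p)⁻¹(1-p))`. -/
noncomputable def cayleyT {n : ℕ} (x : (Fin n → ℍ[ℝ]) × ℍ[ℝ]) :
    (Fin n → ℍ[ℝ]) × ℍ[ℝ] :=
  (fun α => (1 + x.2)⁻¹ * x.1 α, (1 + x.2)⁻¹ * (1 - x.2))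

/-- The inverse Cayley transform `(q',p') ↦ (2(1+p')⁻¹q', (1+p')⁻¹(1-p'))`. -/
noncomputable def cayleyTInv {n : ℕ} (x : (Fin n → ℍ[ℝ]) × ℍ[ℝ]) :
    (Fin n → ℍ[ℝ]) × ℍ[ℝ] :=
  (fun α => 2 * ((1 + x.2)⁻¹ * x.1 α), (1 + x.2)⁻¹ * (1 - x.2))

section DivisionRing

variable {K : Type*} [DivisionRing K] {p : K}

def cayley (p : K) : K := (1 + p)⁻¹ * (1 - p)

theorem one_add_cayley (hp : 1 + p ≠ 0) : 1 + cayley p = (1 + p)⁻¹ * 2 := by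
  calc 1 + cayley p = (1 + p)⁻¹ * ((1 + p) + (1 - p)) := by
        rw [cayley, mul_add, inv_mul_cancel₀ hp]
    _ = (1 + p)⁻¹ * 2 := by rw [add_add_sub_cancel, one_add_one_eq_two]

theorem one_sub_cayley (hp : 1 + p ≠ 0) : 1 - cayley p = (1 + p)⁻¹ * (2 * p) := by
  calc 1 - cayley p = (1 + p)⁻¹ * ((1 + p) - (1 - p)) := by
        rw [cayley, mul_sub _ (1 + p), inv_mul_cancel₀ hp]
    _ = (1 + p)⁻¹ * (2 * p) := by rw [add_sub_sub_cancel, ← two_mul]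

theorem inv_one_add_cayley (hp : 1 + p ≠ 0) : (1 + cayley p)⁻¹ = 2⁻¹ * (1 + p) := by
  rw [one_add_cayley hp, mul_inv_rev, inv_inv]

variable [NeZero (2 : K)]

theorem one_add_cayley_ne_zero (hp : 1 + p ≠ 0) : 1 + cayley p ≠ 0 := by
  rw [one_add_cayley hp]
  exact mul_ne_zero (inv_ne_zero hp) two_ne_zero

theorem cayley_cayley (hp : 1 + p ≠ 0) : cayley (cayley p) = p := by
  rw [cayley, inv_one_add_cayley hp, one_sub_cayley hp, mul_assoc, mul_inv_cancel_left₀ hp,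
    inv_mul_cancel_left₀ two_ne_zero]

end DivisionRing

namespace Quaternion

instance {R : Type*} [CommRing R] [CharZero R] : CharZero ℍ[R] :=
  charZero_of_injective_algebraMap coe_injective

theorem normSq_two {R : Type*} [CommRing R] : normSq (2 : ℍ[R]) = 4 := by
  rw [← Nat.cast_ofNat, normSq_natCast]
  norm_num

variable {R : Type*} [Field R] [LinearOrder R] [IsStrictOrderedRing R]

theorem normSq_one_add (p : ℍ[R]) : normSq (1 + p) = normSq (1 - p) + 4 * p.re := by
  simp only [normSq_def', re_add, re_sub, imI_add, imI_sub, imJ_add, imJ_sub, imK_add, imK_sub,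
    re_one, imI_one, imJ_one, imK_one]
  ring

theorem re_cayley (p : ℍ[R]) : (cayley p).re = (1 - normSq p) / normSq (1 + p) := by
  have h : (star (1 + p) * (1 - p)).re = 1 - normSq p := by
    rw [star_add, star_one, add_mul, one_mul, mul_sub, mul_one, star_mul_self]
    simp only [re_add, re_sub, re_one, re_star, re_coe]
    ring
  rw [cayley, inv_def, smul_mul_assoc, re_smul, smul_eq_mul, h, inv_mul_eq_div]

theorem normSq_cayley (p : ℍ[R]) : normSq (cayley p) = normSq (1 - p) / normSq (1 + p) := by
  rw [cayley, map_mul, map_inv₀, inv_mul_eq_div]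

theorem one_add_ne_zero_of_re_nonneg {p : ℍ[R]} (hp : 0 ≤ p.re) : 1 + p ≠ 0 := by
  intro h
  have h1 : (1 + p).re = 0 := by rw [h, re_zero]
  rw [re_add, re_one] at h1
  linarith

end Quaternion

open Quaternion

section CayleyTransform

variable {n : ℕ}

theorem cayleyTInv_cayleyT {x : (Fin n → ℍ[ℝ]) × ℍ[ℝ]} (hx : 1 + x.2 ≠ 0) :
    cayleyTInv (cayleyT x) = x := by
  refine Prod.ext (funext fun α => ?_) (cayley_cayley hx)
  change 2 * ((1 + cayley x.2)⁻¹ * ((1 + x.2)⁻¹ * x.1 α)) = x.1 α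
  rw [inv_one_add_cayley hx, mul_assoc, mul_inv_cancel_left₀ hx, mul_inv_cancel_left₀ two_ne_zero]

theorem cayleyT_cayleyTInv {x : (Fin n → ℍ[ℝ]) × ℍ[ℝ]} (hx : 1 + x.2 ≠ 0) :
    cayleyT (cayleyTInv x) = x := by
  refine Prod.ext (funext fun α => ?_) (cayley_cayley hx)
  change (1 + cayley x.2)⁻¹ * (2 * ((1 + x.2)⁻¹ * x.1 α)) = x.1 α
  rw [inv_one_add_cayley hx, mul_assoc, (Commute.ofNat_right (1 + x.2) 2).left_comm,
    mul_inv_cancel_left₀ hx, inv_mul_cancel_left₀ two_ne_zero]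

theorem re_cayleyT_eq_sum_normSq {x : (Fin n → ℍ[ℝ]) × ℍ[ℝ]}
    (hx : ∑ α, normSq (x.1 α) + normSq x.2 = 1) :
    (cayleyT x).2.re = ∑ α, normSq ((cayleyT x).1 α) := by
  change (cayley x.2).re = ∑ α, normSq ((1 + x.2)⁻¹ * x.1 α)
  simp only [re_cayley, map_mul, map_inv₀, inv_mul_eq_div, ← Finset.sum_div]
  rw [← hx, add_sub_cancel_right]

theorem sum_normSq_cayleyTInv_add_normSq {x : (Fin n → ℍ[ℝ]) × ℍ[ℝ]}
    (hx : x.2.re = ∑ α, normSq (x.1 α)) :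
    ∑ α, normSq ((cayleyTInv x).1 α) + normSq (cayleyTInv x).2 = 1 := by
  have hre : 0 ≤ x.2.re := hx ▸ Finset.sum_nonneg fun _ _ => normSq_nonneg
  have hN : normSq (1 + x.2) ≠ 0 := normSq_ne_zero.2 (one_add_ne_zero_of_re_nonneg hre)
  change ∑ α, normSq (2 * ((1 + x.2)⁻¹ * x.1 α)) + normSq (cayley x.2) = 1
  simp only [normSq_cayley, map_mul, map_inv₀, ← Finset.mul_sum, ← hx, normSq_two]
  rw [normSq_one_add] at hN ⊢
  field_simp
  ring

end CayleyTransform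

/-- The Cayley transform maps the unit sphere `S = {|q|²+|p|² = 1}` minus the point
`(0,-1)` bijectively onto the boundary `Σ = {Re p' = |q'|²}` of the Siegel domain, with
the indicated inverse. -/
theorem cayley_bijection {n : ℕ} :
    (∀ x : (Fin n → ℍ[ℝ]) × ℍ[ℝ],
      (∑ α, Quaternion.normSq (x.1 α)) + Quaternion.normSq x.2 = 1 → x.2 ≠ -1 →
        ((cayleyT x).2.re = ∑ α, Quaternion.normSq ((cayleyT x).1 α)) ∧
        cayleyTInv (cayleyT x) = x) ∧
    (∀ x : (Fin n → ℍ[ℝ]) × ℍ[ℝ],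
      x.2.re = (∑ α, Quaternion.normSq (x.1 α)) →
        ((∑ α, Quaternion.normSq ((cayleyTInv x).1 α)) +
            Quaternion.normSq ((cayleyTInv x).2) = 1) ∧
        cayleyTInv x ≠ (0, -1) ∧
        cayleyT (cayleyTInv x) = x) := by
  refine ⟨fun x hsphere hx => ?_, fun x hsiegel => ?_⟩
  · have hx' : 1 + x.2 ≠ 0 := fun h => hx (eq_neg_of_add_eq_zero_right h)
    exact ⟨re_cayleyT_eq_sum_normSq hsphere, cayleyTInv_cayleyT hx'⟩
  · have hx' : 1 + x.2 ≠ 0 :=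
      one_add_ne_zero_of_re_nonneg (hsiegel ▸ Finset.sum_nonneg fun _ _ => normSq_nonneg)
    refine ⟨sum_normSq_cayleyTInv_add_normSq hsiegel, fun h => ?_, cayleyT_cayleyTInv hx'⟩
    have hc : cayley x.2 = -1 := congrArg Prod.snd h
    exact one_add_cayley_ne_zero hx' (by rw [hc, add_neg_cancel])
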